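/- Example 1.1, normalization and flat top: ∫_ℝ u(x) dx = 1; u(x) = h for all |x| ≤ w; and u(x) < h for all |x| > w. In particular, the supremum of u equals h and is attained exactly on the interval [−w, w]. -/

import Mathlib

open MeasureTheory Set

noncomputable section

/-- `w = log(1 + √2)`. -/
noncomputable def exW : ℝ := Real.log (1 + Real.sqrt 2)

/-- `h = 1/(2(w + √2))`. -/
noncomputable def exH : ℝ := 1 / (2 * (exW + Real.sqrt 2))

/-- The flat-top stationary profile of Example 1.1. -/
noncomputable def exU (x : ℝ) : ℝ :=
  if |x| ≤ exW then exH else 2 * exH * Real.sinh |x| / (Real.cosh |x|) ^ 2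

/-!
On `|x| > w` the profile is `h · 2 sinh|x| / cosh²|x| = h · 2s/(1 + s²)` with `s = sinh|x| > 1`,
and `2s < 1 + s²` for `s ≠ 1`; the two pieces meet at `sinh w = 1`. The tail integrand is the
derivative of `-1/cosh`, so the two tails contribute `2 · 2h / cosh w = 2√2 h`, and the plateau
`2wh`; the choice of `h` makes the total `1`.
-/

namespace Real

theorem two_mul_sinh_div_cosh_sq_lt_one {t : ℝ} (ht : sinh t ≠ 1) :
    2 * sinh t / cosh t ^ 2 < 1 := by
  have hgap : 0 < (sinh t - 1) ^ 2 := by positivity [sub_ne_zero.2 ht]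
  rw [div_lt_one (by positivity), cosh_sq]
  nlinarith

theorem hasDerivAt_neg_inv_cosh (t : ℝ) :
    HasDerivAt (fun s => -(cosh s)⁻¹) (sinh t / cosh t ^ 2) t :=
  ((hasDerivAt_cosh t).inv (cosh_pos t).ne').neg.congr_deriv (by ring)

theorem tendsto_cosh_atTop : Filter.Tendsto cosh Filter.atTop Filter.atTop := by
  refine Filter.tendsto_atTop_mono (fun x => ?_)
    (tendsto_exp_atTop.atTop_div_const (by norm_num : (0 : ℝ) < 2))
  rw [cosh_eq]
  linarith [exp_pos (-x)]

theorem tendsto_neg_inv_cosh_atTop :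
    Filter.Tendsto (fun s => -(cosh s)⁻¹) Filter.atTop (nhds 0) := by
  simpa using tendsto_cosh_atTop.inv_tendsto_atTop.neg

theorem sinh_div_cosh_sq_nonneg {t : ℝ} (ht : 0 ≤ t) : 0 ≤ sinh t / cosh t ^ 2 :=
  div_nonneg (sinh_nonneg_iff.2 ht) (by positivity)

theorem integrableOn_Ioi_sinh_div_cosh_sq {a : ℝ} (ha : 0 ≤ a) :
    IntegrableOn (fun t => sinh t / cosh t ^ 2) (Ioi a) :=
  integrableOn_Ioi_deriv_of_nonneg' (fun t _ => hasDerivAt_neg_inv_cosh t)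
    (fun _ ht => sinh_div_cosh_sq_nonneg (ha.trans ht.out.le)) tendsto_neg_inv_cosh_atTop

theorem integral_Ioi_sinh_div_cosh_sq {a : ℝ} (ha : 0 ≤ a) :
    ∫ t in Ioi a, sinh t / cosh t ^ 2 = (cosh a)⁻¹ := by
  rw [integral_Ioi_of_hasDerivAt_of_nonneg' (fun t _ => hasDerivAt_neg_inv_cosh t)
    (fun _ ht => sinh_div_cosh_sq_nonneg (ha.trans ht.out.le)) tendsto_neg_inv_cosh_atTop]
  ring

end Real

theorem integral_Ioi_zero_ite_le {a c : ℝ} {g : ℝ → ℝ} (ha : 0 ≤ a)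
    (hg : IntegrableOn g (Ioi a)) :
    ∫ t in Ioi 0, (if t ≤ a then c else g t) = a * c + ∫ t in Ioi a, g t := by
  have hflat : EqOn (fun t => if t ≤ a then c else g t) (fun _ => c) (Ioc 0 a) :=
    fun t ht => if_pos ht.2
  have htail : EqOn (fun t => if t ≤ a then c else g t) g (Ioi a) :=
    fun t ht => if_neg (not_le.2 ht.out)
  rw [← Ioc_union_Ioi_eq_Ioi ha, setIntegral_union (Ioc_disjoint_Ioi le_rfl) measurableSet_Ioi
      ((integrableOn_const measure_Ioc_lt_top.ne).congr_fun hflat.symm measurableSet_Ioc)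
      (hg.congr_fun htail.symm measurableSet_Ioi),
    setIntegral_congr_fun measurableSet_Ioc hflat, setIntegral_congr_fun measurableSet_Ioi htail]
  simp [ha]

theorem exW_pos : 0 < exW :=
  Real.log_pos (by linarith [Real.sqrt_pos.2 two_pos])

theorem sinh_exW : Real.sinh exW = 1 := by
  rw [exW, Real.sinh_log (by positivity)]
  field_simp
  nlinarith [Real.sq_sqrt (show (0 : ℝ) ≤ 2 by norm_num)]

theorem cosh_exW : Real.cosh exW = Real.sqrt 2 := by
  rw [exW, Real.cosh_log (by positivity)]
  field_simp
  nlinarith [Real.sq_sqrt (show (0 : ℝ) ≤ 2 by norm_num)]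

theorem exH_pos : 0 < exH :=
  one_div_pos.2 (by linarith [exW_pos, Real.sqrt_pos.2 two_pos])

theorem exU_of_abs_le {x : ℝ} (hx : |x| ≤ exW) : exU x = exH := if_pos hx

theorem exU_lt_exH_of_lt_abs {x : ℝ} (hx : exW < |x|) : exU x < exH := by
  have hsinh : Real.sinh |x| ≠ 1 :=
    (sinh_exW ▸ Real.sinh_lt_sinh.2 hx).ne'
  calc exU x = exH * (2 * Real.sinh |x| / Real.cosh |x| ^ 2) := by
        rw [exU, if_neg (not_le.2 hx)]; ring
    _ < exH * 1 := mul_lt_mul_of_pos_left (Real.two_mul_sinh_div_cosh_sq_lt_one hsinh) exH_pos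
    _ = exH := mul_one exH

theorem exU_le_exH (x : ℝ) : exU x ≤ exH := by
  rcases le_or_gt |x| exW with hx | hx
  · exact (exU_of_abs_le hx).le
  · exact (exU_lt_exH_of_lt_abs hx).le

theorem integral_exU : ∫ x, exU x = 1 := by
  have htail : IntegrableOn (fun t => 2 * exH * (Real.sinh t / Real.cosh t ^ 2)) (Ioi exW) :=
    (Real.integrableOn_Ioi_sinh_div_cosh_sq exW_pos.le).const_mul _
  set g : ℝ → ℝ := fun t => if t ≤ exW then exH else 2 * exH * (Real.sinh t / Real.cosh t ^ 2)
  have hprofile : ∀ x, exU x = g |x| := fun x => by simp only [exU, g, mul_div_assoc]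
  have hH : exH * (2 * (exW + Real.sqrt 2)) = 1 :=
    one_div_mul_cancel (by linarith [exW_pos, Real.sqrt_pos.2 two_pos])
  rw [integral_congr_ae (Filter.Eventually.of_forall hprofile), integral_comp_abs,
    integral_Ioi_zero_ite_le exW_pos.le htail, integral_const_mul,
    Real.integral_Ioi_sinh_div_cosh_sq exW_pos.le, cosh_exW, ← one_div,
    ← Real.sqrt_div_self', ← hH]
  ring

/-- Example 1.1, normalization and flat top: `∫ u = 1`, `u = h` on `[−w, w]`, `u < h`
outside, and the supremum of `u` equals `h`. -/
theorem stmt13 :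
    (∫ x : ℝ, exU x) = 1 ∧
    (∀ x : ℝ, |x| ≤ exW → exU x = exH) ∧
    (∀ x : ℝ, exW < |x| → exU x < exH) ∧
    (⨆ x : ℝ, exU x) = exH :=
  ⟨integral_exU, fun _ => exU_of_abs_le, fun _ => exU_lt_exH_of_lt_abs,
    ciSup_eq_of_forall_le_of_forall_lt_exists_gt exU_le_exH
      fun _ hb => ⟨0, (exU_of_abs_le (x := 0) (by simp [exW_pos.le])).symm ▸ hb⟩⟩
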